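/- arXiv:2604.18869 — 2 statements merged into one kernel-verified Lean document; each statement's English description precedes it below -/
import Mathlib

section
/- Fix an integer n ≥ 2 and let S_n = W_{<n} ∪ {α, β} be the semigroup of non-empty words over ℕ of length < n together with symbols α, β (multiplication: any product with a factor α or β equals α; two words multiply by concatenation if the total length is < n, give β if the total length is exactly n, and give α if the total length exceeds n). For q ≥ 1 let A_{n,q} := {α} ∪ {[m] : m ≥ q}. Then the product intersection set of the family (A_{n,q})_{q≥1} equals ℕ \ {n}; that is, for every h ∈ ℕ, (⋂_{q≥1} A_{n,q})^h = ⋂_{q≥1} A_{n,q}^h if and only if h ≠ n. -/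
open Pointwise

/-- The carrier `S_n = W_{<n} ∪ {α, β}`: non-empty words over the alphabet
`ℕ = {1, 2, 3, …}` (encoded as `ℕ+`) of length `< n`, together with two extra
symbols `α` and `β`. -/
inductive Sn (n : ℕ) : Type where
  | word : (l : List ℕ+) → l ≠ [] → l.length < n → Sn n
  | alpha : Sn n
  | beta : Sn n

/-- Multiplication on `S_n`: any product with a factor `α` or `β` equals `α`; two words
multiply by concatenation if the total length is `< n`, give `β` if the total length is
exactly `n`, and give `α` if the total length exceeds `n`. -/
def Sn.mul {n : ℕ} : Sn n → Sn n → Sn n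
  | .word u hu _, .word v hv _ =>
      if h : u.length + v.length < n then
        .word (u ++ v) (by simp [hu, hv]) (by simpa using h)
      else if u.length + v.length = n then .beta else .alpha
  | _, _ => .alpha

instance (n : ℕ) : Mul (Sn n) := ⟨Sn.mul⟩

/-- The `h`-fold product set `B^h = {b₁ ⋯ b_h : b₁, …, b_h ∈ B}` for `h ≥ 1`
(the value at `h = 0` is junk). -/
def prodSet {S : Type*} [Mul S] (B : Set S) : ℕ → Set S
  | 0 => ∅
  | 1 => B
  | n + 2 => prodSet B (n + 1) * B

/-- The subset `A_{n,q} = {α} ∪ {[m] : m ≥ q}` of `S_n`, where `[m]` is the one-letter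
word whose only letter is `m`. -/
def Aset (n : ℕ) (q : ℕ+) : Set (Sn n) :=
  {x | x = Sn.alpha ∨
    ∃ (m : ℕ+) (hn : 1 < n), q ≤ m ∧ x = Sn.word [m] (List.cons_ne_nil m []) (by simpa using hn)}

/-!
Since `[m] ∉ A_{n,m+1}`, the intersection of the `A_{n,q}` is `{α}`, and `α` is idempotent,
so `(⋂ A_{n,q})^h = {α}`. By induction on `h`, an element of `A_{n,q}^h` is `α`, or `β` (only
when `h = n`), or a word of length `h` all of whose letters are `≥ q`; no word has all its
letters `≥ q` for every `q`, so `⋂ A_{n,q}^h = {α}` for `h ≠ n`. For `h = n` instead,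
`[q]^{n-1} · [q] = β` lies in every `A_{n,q}^n`.
-/

section prodSet

variable {S : Type*} [Mul S]

lemma prodSet_succ_of_ne_zero (B : Set S) {k : ℕ} (hk : k ≠ 0) :
    prodSet B (k + 1) = prodSet B k * B := by
  obtain ⟨j, rfl⟩ := Nat.exists_eq_succ_of_ne_zero hk
  rfl

lemma mul_mem_prodSet_succ {B : Set S} {x b : S} {k : ℕ} (hk : k ≠ 0) (hx : x ∈ prodSet B k)
    (hb : b ∈ B) : x * b ∈ prodSet B (k + 1) := by
  rw [prodSet_succ_of_ne_zero B hk]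
  exact Set.mul_mem_mul hx hb

lemma prodSet_mono {B C : Set S} (hBC : B ⊆ C) : ∀ h, prodSet B h ⊆ prodSet C h
  | 0 => subset_rfl
  | 1 => hBC
  | k + 2 => Set.mul_subset_mul (prodSet_mono hBC (k + 1)) hBC

lemma prodSet_singleton_of_mul_self {a : S} (ha : a * a = a) :
    ∀ {h : ℕ}, h ≠ 0 → prodSet {a} h = {a}
  | 1, _ => rfl
  | k + 2, _ => by
    rw [prodSet_succ_of_ne_zero _ k.succ_ne_zero,
      prodSet_singleton_of_mul_self ha k.succ_ne_zero, Set.singleton_mul_singleton, ha]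

lemma mem_prodSet_of_mul_self {B : Set S} {a : S} (ha : a * a = a) (haB : a ∈ B) {h : ℕ}
    (hh : h ≠ 0) : a ∈ prodSet B h :=
  prodSet_mono (Set.singleton_subset_iff.2 haB) h
    (by rw [prodSet_singleton_of_mul_self ha hh]; rfl)

end prodSet

namespace Sn

variable {n : ℕ}

@[simp] lemma alpha_mul (x : Sn n) : alpha * x = alpha := by cases x <;> rfl

@[simp] lemma mul_alpha (x : Sn n) : x * alpha = alpha := by cases x <;> rfl

@[simp] lemma beta_mul (x : Sn n) : beta * x = alpha := by cases x <;> rfl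

lemma word_mul_word (u v : List ℕ+) (hu hv hun hvn) :
    (word u hu hun : Sn n) * word v hv hvn =
      if h : u.length + v.length < n then word (u ++ v) (by simp [hu]) (by simpa using h)
      else if u.length + v.length = n then beta else alpha :=
  rfl

lemma alpha_mem_Aset (q : ℕ+) : alpha ∈ Aset n q := Or.inl rfl

lemma word_singleton_mem_Aset {q m : ℕ+} (hqm : q ≤ m) (hn : 1 < n) :
    word [m] (List.cons_ne_nil m []) (by simpa using hn) ∈ Aset n q :=
  Or.inr ⟨m, hn, hqm, rfl⟩

lemma iInter_Aset : ⋂ q : ℕ+, Aset n q = {alpha} := by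
  refine Set.Subset.antisymm ?_ (Set.singleton_subset_iff.2 <| Set.mem_iInter.2 alpha_mem_Aset)
  intro x hx
  rw [Set.mem_iInter] at hx
  rcases hx 1 with rfl | ⟨m, _, _, rfl⟩
  · rfl
  · rcases hx (m + 1) with h | ⟨m', _, hle, hm'⟩
    · cases h
    · simp only [word.injEq, List.cons.injEq, and_true] at hm'
      subst hm'
      exact absurd hle (not_le.2 (PNat.lt_add_right m 1))

lemma eq_alpha_or_eq_beta_or_eq_word_of_mem_prodSet_Aset {q : ℕ+} :
    ∀ {h : ℕ} {x : Sn n}, x ∈ prodSet (Aset n q) h →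
      x = alpha ∨ (x = beta ∧ h = n) ∨
        ∃ (l : List ℕ+) (hl : l ≠ []) (hln : l.length < n),
          x = word l hl hln ∧ l.length = h ∧ ∀ m ∈ l, q ≤ m
  | 0, _, hx => hx.elim
  | 1, _, .inl hx => .inl hx
  | 1, _, .inr ⟨m, hn, hqm, hx⟩ =>
    .inr <| .inr ⟨[m], _, _, hx, rfl, by simpa using hqm⟩
  | k + 2, _, hx => by
    rw [prodSet_succ_of_ne_zero _ k.succ_ne_zero] at hx
    obtain ⟨y, hy, b, hb, rfl⟩ := hx
    rcases eq_alpha_or_eq_beta_or_eq_word_of_mem_prodSet_Aset hy with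
      rfl | ⟨rfl, -⟩ | ⟨l, hl, hln, rfl, hlen, hlq⟩
    · simp
    · simp
    rcases hb with rfl | ⟨m, hn, hqm, rfl⟩
    · simp
    beta_reduce
    rw [word_mul_word]
    split_ifs with hlt hlen_eq
    · refine .inr <| .inr
        ⟨l ++ [m], by simp [hl], by simpa using hlt, rfl, by simp [hlen], fun a ha => ?_⟩
      rcases List.mem_append.1 ha with ha | ha
      · exact hlq a ha
      · rwa [List.mem_singleton.1 ha]
    · exact .inr <| .inl ⟨rfl, by simpa [hlen] using hlen_eq⟩
    · exact .inl rfl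

lemma iInter_prodSet_Aset_subset {h : ℕ} (hhn : h ≠ n) :
    ⋂ q : ℕ+, prodSet (Aset n q) h ⊆ {alpha} := by
  intro x hx
  rcases eq_alpha_or_eq_beta_or_eq_word_of_mem_prodSet_Aset (Set.mem_iInter.1 hx 1) with
    hxα | ⟨_, rfl⟩ | ⟨l, hl, _, rfl, _⟩
  · exact hxα
  · exact absurd rfl hhn
  obtain ⟨m, hm⟩ := List.exists_mem_of_ne_nil l hl
  rcases eq_alpha_or_eq_beta_or_eq_word_of_mem_prodSet_Aset (Set.mem_iInter.1 hx (m + 1)) with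
    h | ⟨h, -⟩ | ⟨l', _, _, hxl', _, hl'q⟩
  · cases h
  · cases h
  · obtain rfl : l = l' := by simpa using hxl'
    exact absurd (hl'q m hm) (not_le.2 (PNat.lt_add_right m 1))

lemma word_replicate_mem_prodSet_Aset (q : ℕ+) :
    ∀ {h : ℕ} (hh : h ≠ 0) (hhn : h < n),
      word (List.replicate h q) (by simpa using hh) (by simpa using hhn) ∈ prodSet (Aset n q) h
  | 1, _, hhn => word_singleton_mem_Aset le_rfl hhn
  | k + 2, _, hhn => by
    have hprod := mul_mem_prodSet_succ k.succ_ne_zero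
      (word_replicate_mem_prodSet_Aset q k.succ_ne_zero (by omega))
      (word_singleton_mem_Aset (le_refl q) (by omega))
    rw [word_mul_word, dif_pos (by simpa using hhn)] at hprod
    simpa [← List.replicate_succ'] using hprod

lemma beta_mem_prodSet_Aset (hn : 2 ≤ n) (q : ℕ+) : beta ∈ prodSet (Aset n q) n := by
  obtain ⟨k, rfl⟩ := Nat.exists_eq_add_of_le' hn
  have hprod := mul_mem_prodSet_succ k.succ_ne_zero
    (word_replicate_mem_prodSet_Aset (n := k + 2) q k.succ_ne_zero (by omega))
    (word_singleton_mem_Aset (le_refl q) (by omega))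
  simpa [word_mul_word] using hprod

end Sn

theorem stmt_8_general (n : ℕ) (hn : 2 ≤ n) (h : ℕ) :
    prodSet (⋂ q : ℕ+, Aset n q) h = (⋂ q : ℕ+, prodSet (Aset n q) h) ↔ h ≠ n := by
  rw [Sn.iInter_Aset]
  rcases eq_or_ne h 0 with rfl | hh
  · simp only [prodSet, Set.iInter_const, true_iff]
    omega
  rw [prodSet_singleton_of_mul_self (Sn.alpha_mul _) hh]
  constructor
  · rintro heq rfl
    have hβ := heq ▸ Set.mem_iInter.2 (Sn.beta_mem_prodSet_Aset hn)
    cases hβ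
  · intro hhn
    refine Set.Subset.antisymm ?_ (Sn.iInter_prodSet_Aset_subset hhn)
    exact Set.singleton_subset_iff.2 <| Set.mem_iInter.2 fun q =>
      mem_prodSet_of_mul_self (Sn.alpha_mul _) (Sn.alpha_mem_Aset q) hh

/-- For `n ≥ 2`, the product intersection set of the family `(A_{n,q})_{q ≥ 1}` equals
`ℕ \ {n}`: for every `h ∈ ℕ = {1, 2, …}`, the `h`-fold product set of the intersection
equals the intersection of the `h`-fold product sets if and only if `h ≠ n`. -/
theorem stmt_8 (n : ℕ) (hn : 2 ≤ n) (h : ℕ) (h1 : 1 ≤ h) :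
    prodSet (⋂ q : ℕ+, Aset n q) h = (⋂ q : ℕ+, prodSet (Aset n q) h) ↔ h ≠ n :=
  stmt_8_general n hn h
end

section
/- Fix an integer n ≥ 2 and let S_n = {0, 1, …, n³ + n²} be the semigroup with operation x ⋆ y = min(x + y, n³ + n²). Define B_n = {n², n² + 1} and C_n = {n², n² + n} as subsets of S_n. Then for every h ∈ ℕ with h ≤ n, the h-fold product sets satisfy B_n^h = {h·n² + j : 0 ≤ j ≤ h} and C_n^h = {h·n² + j·n : 0 ≤ j ≤ h}, while for every h > n one has B_n^h = C_n^h = {n³ + n²}. -/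
open Pointwise

/-- The carrier `S_n = {0, 1, …, n³ + n²}`. -/
structure Tr (n : ℕ) where
  val : ℕ
  le : val ≤ n ^ 3 + n ^ 2

/-- The semigroup operation `x ⋆ y = min (x + y) (n³ + n²)` on `S_n`. -/
instance (n : ℕ) : Mul (Tr n) :=
  ⟨fun x y => ⟨min (x.val + y.val) (n ^ 3 + n ^ 2), min_le_right _ _⟩⟩

/-- The subset `B_n = {n², n² + 1}` of `S_n`. -/
def Bset (n : ℕ) : Set (Tr n) := {x | x.val = n ^ 2 ∨ x.val = n ^ 2 + 1}

/-- The subset `C_n = {n², n² + n}` of `S_n`. -/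
def Cset (n : ℕ) : Set (Tr n) := {x | x.val = n ^ 2 ∨ x.val = n ^ 2 + n}

theorem Tr.ext' {n : ℕ} {x y : Tr n} (h : x.val = y.val) : x = y := by
  cases x; cases y; simpa using h

theorem mul_val {n : ℕ} (x y : Tr n) :
    (x * y).val = min (x.val + y.val) (n ^ 3 + n ^ 2) := rfl

theorem prodSet_succ {S : Type*} [Mul S] (B : Set S) (h : ℕ) (h1 : 1 ≤ h) :
    prodSet B (h + 1) = prodSet B h * B := by
  match h, h1 with
  | k + 1, _ => rfl

def Bg (n a d : ℕ) : Set (Tr n) := {x | x.val = a ∨ x.val = a + d}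

theorem main_lemma (n a d h : ℕ) (h1 : 1 ≤ h)
    (hb : h * (a + d) ≤ n ^ 3 + n ^ 2) :
    prodSet (Bg n a d) h = {x : Tr n | ∃ j, j ≤ h ∧ x.val = h * a + j * d} := by
  induction h, h1 using Nat.le_induction with
  | base =>
    ext x
    simp only [prodSet, Bg, Set.mem_setOf_eq]
    constructor
    · rintro (hx | hx)
      · exact ⟨0, by omega, by omega⟩
      · exact ⟨1, le_rfl, by omega⟩
    · rintro ⟨j, hj, hx⟩
      interval_cases j <;> omega
  | succ h h1 ih =>
    have hb' : h * (a + d) ≤ n ^ 3 + n ^ 2 := le_trans (Nat.mul_le_mul_right _ (by omega)) hb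
    have e1 : (h + 1) * (a + d) = h * a + h * d + a + d := by ring
    have e2 : (h + 1) * a = h * a + a := by ring
    have e3 : (h + 1) * d = h * d + d := by ring
    have e4 : h * (a + d) = h * a + h * d := by ring
    rw [prodSet_succ _ _ h1, ih hb']
    ext x
    simp only [Set.mem_mul, Set.mem_setOf_eq, Bg]
    constructor
    · rintro ⟨y, ⟨j, hj, hy⟩, b, hbmem, rfl⟩
      have hjd : j * d ≤ h * d := Nat.mul_le_mul_right _ hj
      have hexp : h * (a + d) = h * a + h * d := by ring
      have hexp2 : (h + 1) * (a + d) = h * a + h * d + a + d := by ring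
      rcases hbmem with hbv | hbv
      · refine ⟨j, by omega, ?_⟩
        rw [mul_val, hy, hbv]
        have : (h + 1) * a + j * d = h * a + j * d + a := by ring
        omega
      · refine ⟨j + 1, by omega, ?_⟩
        rw [mul_val, hy, hbv]
        have : (h + 1) * a + (j + 1) * d = h * a + j * d + (a + d) := by ring
        omega
    · rintro ⟨j, hj, hx⟩
      have hexp : h * (a + d) = h * a + h * d := by ring
      by_cases hjh : j ≤ h
      · have hjd : j * d ≤ h * d := Nat.mul_le_mul_right _ hjh
        refine ⟨⟨h * a + j * d, by omega⟩, ⟨j, hjh, rfl⟩, ⟨a, by omega⟩, Or.inl rfl, ?_⟩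
        apply Tr.ext'
        rw [mul_val]
        have : (h + 1) * a + j * d = h * a + j * d + a := by ring
        simp only [hx]
        omega
      · have hj1 : j = h + 1 := by omega
        refine ⟨⟨h * a + h * d, by omega⟩, ⟨h, le_rfl, rfl⟩, ⟨a + d, by omega⟩, Or.inr rfl, ?_⟩
        apply Tr.ext'
        rw [mul_val]
        have : (h + 1) * a + (h + 1) * d = h * a + h * d + (a + d) := by ring
        simp only [hx, hj1]
        omega

theorem low_bound (n a d h : ℕ) (h1 : 1 ≤ h) :
    ∀ x ∈ prodSet (Bg n a d) h, min (h * a) (n ^ 3 + n ^ 2) ≤ x.val := by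
  induction h, h1 using Nat.le_induction with
  | base =>
    rintro x (hx | hx) <;> simp [hx]
  | succ h h1 ih =>
    rw [prodSet_succ _ _ h1]
    rintro x ⟨y, hy, b, hbmem, rfl⟩
    have hyv := ih y hy
    have hbv : a ≤ b.val := by rcases hbmem with h' | h' <;> omega
    rw [mul_val]
    have e2 : (h + 1) * a = h * a + a := by ring
    omega

theorem nonempty_prodSet (n a d h : ℕ) (h1 : 1 ≤ h) (ha : a + d ≤ n ^ 3 + n ^ 2) :
    (prodSet (Bg n a d) h).Nonempty := by
  induction h, h1 using Nat.le_induction with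
  | base => exact ⟨⟨a, by omega⟩, Or.inl rfl⟩
  | succ h h1 ih =>
    obtain ⟨y, hy⟩ := ih
    exact ⟨y * ⟨a, by omega⟩, by rw [prodSet_succ _ _ h1]; exact ⟨y, hy, _, Or.inl rfl, rfl⟩⟩

theorem overflow (n a d h : ℕ) (h1 : 1 ≤ h) (ha : a + d ≤ n ^ 3 + n ^ 2)
    (hlow : n ^ 3 + n ^ 2 ≤ h * a) :
    prodSet (Bg n a d) h = {(⟨n ^ 3 + n ^ 2, le_rfl⟩ : Tr n)} := by
  apply Set.eq_singleton_iff_nonempty_unique_mem.mpr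
  refine ⟨nonempty_prodSet n a d h h1 ha, fun x hx => ?_⟩
  have := low_bound n a d h h1 x hx
  have := x.le
  apply Tr.ext'
  simp only
  omega

theorem Bset_eq (n : ℕ) : Bset n = Bg n (n ^ 2) 1 := rfl

theorem Cset_eq (n : ℕ) : Cset n = Bg n (n ^ 2) n := rfl

/-- For `n ≥ 2`: for every `h` with `1 ≤ h ≤ n`, `B_n^h = {h·n² + j : 0 ≤ j ≤ h}` and
`C_n^h = {h·n² + j·n : 0 ≤ j ≤ h}`, while for every `h > n`,
`B_n^h = C_n^h = {n³ + n²}`. -/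
theorem stmt_17 (n : ℕ) (hn : 2 ≤ n) :
    (∀ h : ℕ, 1 ≤ h → h ≤ n →
      prodSet (Bset n) h = {x : Tr n | ∃ j, j ≤ h ∧ x.val = h * n ^ 2 + j} ∧
      prodSet (Cset n) h = {x : Tr n | ∃ j, j ≤ h ∧ x.val = h * n ^ 2 + j * n}) ∧
    (∀ h : ℕ, n < h →
      prodSet (Bset n) h = {(⟨n ^ 3 + n ^ 2, le_rfl⟩ : Tr n)} ∧
      prodSet (Cset n) h = {(⟨n ^ 3 + n ^ 2, le_rfl⟩ : Tr n)}) := by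
  have key : n * (n ^ 2 + n) = n ^ 3 + n ^ 2 := by ring
  constructor
  · intro h h1 h2
    have hbB : h * (n ^ 2 + 1) ≤ n ^ 3 + n ^ 2 := by
      calc h * (n ^ 2 + 1) ≤ n * (n ^ 2 + n) :=
            Nat.mul_le_mul h2 (by omega)
        _ = n ^ 3 + n ^ 2 := key
    have hbC : h * (n ^ 2 + n) ≤ n ^ 3 + n ^ 2 := by
      calc h * (n ^ 2 + n) ≤ n * (n ^ 2 + n) := Nat.mul_le_mul_right _ h2
        _ = n ^ 3 + n ^ 2 := key
    constructor
    · rw [Bset_eq, main_lemma n _ _ h h1 hbB]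
      simp [mul_one]
    · rw [Cset_eq, main_lemma n _ _ h h1 hbC]
  · intro h hh
    have h1 : 1 ≤ h := by omega
    have hlow : n ^ 3 + n ^ 2 ≤ h * n ^ 2 := by
      calc n ^ 3 + n ^ 2 = (n + 1) * n ^ 2 := by ring
        _ ≤ h * n ^ 2 := Nat.mul_le_mul_right _ (by omega)
    constructor
    · rw [Bset_eq]
      exact overflow n _ _ h h1 (by nlinarith) hlow
    · rw [Cset_eq]
      exact overflow n _ _ h h1 (by nlinarith) hlow
end
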